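/- A tournament is a lexicographical sum of acyclic tournaments indexed by a finite tournament if and only if it has only finitely many acyclic components. -/
import Mathlib


universe u v

/-- `r` is a tournament relation on `V`: irreflexive and, for distinct vertices,
exactly one of the two directed edges is present. -/
def IsTournament {V : Type u} (r : V → V → Prop) : Prop :=
  (∀ x, ¬ r x x) ∧ ∀ x y : V, x ≠ y → (r x y ↔ ¬ r y x)

/-- A subset `A` is autonomous in the tournament `r`. -/
def Autonomous {V : Type u} (r : V → V → Prop) (A : Set V) : Prop :=
  ∀ x ∈ A, ∀ x' ∈ A, ∀ y ∉ A, (r x y ↔ r x' y)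

/-- A subset `A` is acyclic: it contains no 3-cycle. -/
def AcyclicSet {V : Type u} (r : V → V → Prop) (A : Set V) : Prop :=
  ¬ ∃ a ∈ A, ∃ b ∈ A, ∃ c ∈ A, r a b ∧ r b c ∧ r c a

/-- The acyclic component of a vertex `x`: the union of all acyclic autonomous
subsets containing `x`. -/
def acyclicComponent {V : Type u} (r : V → V → Prop) (x : V) : Set V :=
  ⋃₀ {A : Set V | x ∈ A ∧ Autonomous r A ∧ AcyclicSet r A}

/-- `A` is an acyclic component of the tournament `r`. -/
def IsAcyclicComponent {V : Type u} (r : V → V → Prop) (A : Set V) : Prop :=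
  ∃ x, A = acyclicComponent r x

/-- A tournament is acyclically indecomposable if every acyclic autonomous subset
has at most one element. -/
def AcyclicallyIndecomposable {V : Type u} (r : V → V → Prop) : Prop :=
  ∀ A : Set V, Autonomous r A → AcyclicSet r A → A.Subsingleton

/-- The type of acyclic components of `r`. -/
def AcComp {V : Type u} (r : V → V → Prop) : Type u :=
  {A : Set V // IsAcyclicComponent r A}

/-- The quotient tournament `Ť` on the set of acyclic components. -/
def quotRel {V : Type u} (r : V → V → Prop) : AcComp r → AcComp r → Prop :=
  fun A B => A ≠ B ∧ ∃ x ∈ A.val, ∃ y ∈ B.val, r x y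

/-- The lexicographical sum of the tournaments `rels i` indexed by the tournament `d`. -/
def lexSumRel {I : Type u} {F : I → Type v} (d : I → I → Prop)
    (rels : ∀ i, F i → F i → Prop) : (Σ i, F i) → (Σ i, F i) → Prop :=
  fun p q => (p.1 ≠ q.1 ∧ d p.1 q.1) ∨
    ∃ h : p.1 = q.1, rels q.1 (cast (congrArg F h) p.2) q.2

/-- The subtournaments induced on the finite sets `s` and `t` are isomorphic. -/
def InducedIso {V : Type u} (r : V → V → Prop) (s t : Finset V) : Prop :=
  ∃ e : {x // x ∈ s} ≃ {x // x ∈ t},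
    ∀ a b : {x // x ∈ s}, r a.val b.val ↔ r (e a).val (e b).val

/-- The profile of a tournament: the number of isomorphism classes of subtournaments
induced on `n`-element subsets of the vertex set. -/
noncomputable def profile {V : Type u} (r : V → V → Prop) (n : ℕ) : ℕ :=
  Nat.card (Quot (fun s t : {w : Finset V // w.card = n} => InducedIso r s.val t.val))

/-- `r` is (isomorphic to) a lexicographical sum of acyclic tournaments indexed by a
finite tournament. -/
def IsFiniteLexSumOfAcyclic {V : Type u} (r : V → V → Prop) : Prop :=
  ∃ (I : Type) (d : I → I → Prop) (F : I → Type u)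
    (rels : ∀ i, F i → F i → Prop),
    Finite I ∧ IsTournament d ∧
    (∀ i, IsTournament (rels i) ∧ AcyclicSet (rels i) Set.univ) ∧
    ∃ e : V ≃ (Σ i, F i), ∀ x y, r x y ↔ lexSumRel d rels (e x) (e y)

/-- A bundled tournament (vertex type together with its edge relation). -/
structure Tour : Type 1 where
  V : Type
  rel : V → V → Prop

/-- `S` is embeddable in the tournament `r`: `S` is isomorphic to a subtournament of `r`. -/
def Tour.EmbedsIn {W : Type u} (S : Tour) (r : W → W → Prop) : Prop :=
  ∃ f : S.V → W, Function.Injective f ∧ ∀ x y, S.rel x y ↔ r (f x) (f y)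

/-- The profile of a bundled tournament. -/
noncomputable def Tour.profile (T : Tour) (n : ℕ) : ℕ := _root_.profile T.rel n

/-- The quotient tournament `Ť` of a bundled tournament, on its acyclic components. -/
def Tour.check (T : Tour) : Tour := ⟨AcComp T.rel, quotRel T.rel⟩

/-- The tournament `C3[C]` for an acyclic tournament `C = (A, lt)`. -/
def c3Rel {A : Type} (lt : A → A → Prop) : A × Fin 3 → A × Fin 3 → Prop :=
  fun p q => lt p.1 q.1 ∨ (p.1 = q.1 ∧
    ((p.2 = 0 ∧ q.2 = 1) ∨ (p.2 = 1 ∧ q.2 = 2) ∨ (p.2 = 2 ∧ q.2 = 0)))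

/-- The tournament `V[C]` for an acyclic tournament `C = (A, lt)`; `none` is the extra vertex. -/
def vRel {A : Type} (lt : A → A → Prop) (p q : Option (A × Fin 2)) : Prop :=
  match p, q with
  | some p, some q => lt p.1 q.1 ∨ (p.1 = q.1 ∧ p.2 = 0 ∧ q.2 = 1)
  | none, some q => q.2 = 0
  | some p, none => p.2 = 1
  | none, none => False

/-- The tournament `T[C]` for an acyclic tournament `C = (A, lt)`. -/
def tRel {A : Type} (lt : A → A → Prop) : A × Fin 2 → A × Fin 2 → Prop :=
  fun p q =>
    (p.2 = 0 ∧ q.2 = 0 ∧ lt p.1 q.1) ∨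
    (p.1 = q.1 ∧ p.2 = 0 ∧ q.2 = 1) ∨
    (p.2 = 1 ∧ q.2 = 1 ∧ lt p.1 q.1) ∨
    (p.2 = 1 ∧ q.2 = 0 ∧ lt q.1 p.1) ∨
    (p.2 = 0 ∧ q.2 = 1 ∧ lt q.1 p.1)

/-- The tournament `U[C]` for an acyclic tournament `C = (A, lt)`. -/
def uRel {A : Type} (lt : A → A → Prop) : A × Fin 2 → A × Fin 2 → Prop :=
  fun p q =>
    (p.2 = 0 ∧ q.2 = 0 ∧ lt p.1 q.1) ∨
    (p.1 = q.1 ∧ p.2 = 0 ∧ q.2 = 1) ∨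
    (p.2 = 1 ∧ q.2 = 1 ∧ lt q.1 p.1) ∨
    (p.2 = 0 ∧ q.2 = 1 ∧ lt p.1 q.1) ∨
    (p.2 = 1 ∧ q.2 = 0 ∧ lt p.1 q.1)

/-- The tournament `H[C]` for an acyclic tournament `C = (A, lt)`. -/
def hRel {A : Type} (lt : A → A → Prop) : A × Fin 2 → A × Fin 2 → Prop :=
  fun p q =>
    (p.2 = 0 ∧ q.2 = 0 ∧ lt p.1 q.1) ∨
    (p.1 = q.1 ∧ p.2 = 0 ∧ q.2 = 1) ∨
    (p.2 = 1 ∧ q.2 = 1 ∧ lt p.1 q.1) ∨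
    (p.2 = 1 ∧ q.2 = 0 ∧ lt q.1 p.1) ∨
    (p.2 = 1 ∧ q.2 = 0 ∧ lt p.1 q.1)

/-- The tournament `K[C]` for an acyclic tournament `C = (A, lt)`. -/
def kRel {A : Type} (lt : A → A → Prop) : A × Fin 2 → A × Fin 2 → Prop :=
  fun p q =>
    (p.2 = 0 ∧ q.2 = 0 ∧ lt p.1 q.1) ∨
    (p.1 = q.1 ∧ p.2 = 0 ∧ q.2 = 1) ∨
    (p.2 = 1 ∧ q.2 = 1 ∧ lt q.1 p.1) ∨
    (p.2 = 1 ∧ q.2 = 0 ∧ lt q.1 p.1) ∨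
    (p.2 = 1 ∧ q.2 = 0 ∧ lt p.1 q.1)

def c3Tour (A : Type) (lt : A → A → Prop) : Tour := ⟨A × Fin 3, c3Rel lt⟩
def vTour (A : Type) (lt : A → A → Prop) : Tour := ⟨Option (A × Fin 2), vRel lt⟩
def tTour (A : Type) (lt : A → A → Prop) : Tour := ⟨A × Fin 2, tRel lt⟩
def uTour (A : Type) (lt : A → A → Prop) : Tour := ⟨A × Fin 2, uRel lt⟩
def hTour (A : Type) (lt : A → A → Prop) : Tour := ⟨A × Fin 2, hRel lt⟩
def kTour (A : Type) (lt : A → A → Prop) : Tour := ⟨A × Fin 2, kRel lt⟩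

/-- The order type `ω`: the natural numbers with the usual strict order. -/
def omegaLT : ℕ → ℕ → Prop := fun m n => m < n

/-- The order type `ω*`: the natural numbers with the reversed strict order. -/
def omegaStarLT : ℕ → ℕ → Prop := fun m n => n < m

/-- The set `𝔅` of twelve tournaments. -/
def frakB : List Tour :=
  [c3Tour ℕ omegaLT, vTour ℕ omegaLT, tTour ℕ omegaLT,
   uTour ℕ omegaLT, hTour ℕ omegaLT, kTour ℕ omegaLT,
   c3Tour ℕ omegaStarLT, vTour ℕ omegaStarLT, tTour ℕ omegaStarLT,
   uTour ℕ omegaStarLT, hTour ℕ omegaStarLT, kTour ℕ omegaStarLT]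

/-- The set `𝔅_{n̲}` of six tournaments built on the acyclic tournament `({0,…,n−1},<)`. -/
def frakBn (n : ℕ) : List Tour :=
  [c3Tour (Fin n) (· < ·), vTour (Fin n) (· < ·), tTour (Fin n) (· < ·),
   uTour (Fin n) (· < ·), hTour (Fin n) (· < ·), kTour (Fin n) (· < ·)]
section Aux

variable {V : Type u} {r : V → V → Prop}

lemma aux_singleton_autonomous (x : V) : Autonomous r {x} := by
  intro a ha b hb y _
  rw [Set.mem_singleton_iff] at ha hb
  subst ha; subst hb; rfl

lemma aux_singleton_acyclic (hT : IsTournament r) (x : V) : AcyclicSet r {x} := by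
  rintro ⟨a, ha, b, hb, c, hc, h1, h2, h3⟩
  rw [Set.mem_singleton_iff] at ha hb
  subst ha; subst hb
  exact hT.1 _ h1

lemma aux_mem_acyclicComponent (hT : IsTournament r) (x : V) :
    x ∈ acyclicComponent r x :=
  ⟨{x}, ⟨rfl, aux_singleton_autonomous x, aux_singleton_acyclic hT x⟩, rfl⟩

lemma aux_two_in (hT : IsTournament r) {A : Set V} (hAut : Autonomous r A)
    {a b c : V} (ha : a ∈ A) (hb : b ∈ A) (hc : c ∉ A)
    (h1 : r b c) (h2 : r c a) : False := by
  have hac : r a c := (hAut a ha b hb c hc).mpr h1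
  have hne : c ≠ a := fun h => hc (h ▸ ha)
  exact (hT.2 c a hne).mp h2 hac

lemma aux_union (hT : IsTournament r) {A B : Set V}
    (hAutA : Autonomous r A) (hAcA : AcyclicSet r A)
    (hAutB : Autonomous r B) (hAcB : AcyclicSet r B)
    {z : V} (hzA : z ∈ A) (hzB : z ∈ B) :
    Autonomous r (A ∪ B) ∧ AcyclicSet r (A ∪ B) := by
  constructor
  · intro u hu u' hu' y hy
    have hyA : y ∉ A := fun h => hy (Or.inl h)
    have hyB : y ∉ B := fun h => hy (Or.inr h)
    have key : ∀ w ∈ A ∪ B, (r w y ↔ r z y) := by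
      rintro w (hw | hw)
      · exact hAutA w hw z hzA y hyA
      · exact hAutB w hw z hzB y hyB
    exact (key u hu).trans (key u' hu').symm
  · rintro ⟨a, ha, b, hb, c, hc, h1, h2, h3⟩
    by_cases haA : a ∈ A <;> by_cases hbA : b ∈ A <;> by_cases hcA : c ∈ A
    · exact hAcA ⟨a, haA, b, hbA, c, hcA, h1, h2, h3⟩
    · exact aux_two_in hT hAutA haA hbA hcA h2 h3
    · exact aux_two_in hT hAutA hcA haA hbA h1 h2
    · -- only a in A, so b c ∈ B
      have hbB : b ∈ B := hb.resolve_left hbA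
      have hcB : c ∈ B := hc.resolve_left hcA
      by_cases haB : a ∈ B
      · exact hAcB ⟨a, haB, b, hbB, c, hcB, h1, h2, h3⟩
      · exact aux_two_in hT hAutB hbB hcB haB h3 h1
    · exact aux_two_in hT hAutA hbA hcA haA h3 h1
    · -- only b in A
      have haB : a ∈ B := ha.resolve_left haA
      have hcB : c ∈ B := hc.resolve_left hcA
      by_cases hbB : b ∈ B
      · exact hAcB ⟨a, haB, b, hbB, c, hcB, h1, h2, h3⟩
      · exact aux_two_in hT hAutB hcB haB hbB h1 h2
    · -- only c in A
      have haB : a ∈ B := ha.resolve_left haA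
      have hbB : b ∈ B := hb.resolve_left hbA
      by_cases hcB : c ∈ B
      · exact hAcB ⟨a, haB, b, hbB, c, hcB, h1, h2, h3⟩
      · exact aux_two_in hT hAutB haB hbB hcB h2 h3
    · have haB : a ∈ B := ha.resolve_left haA
      have hbB : b ∈ B := hb.resolve_left hbA
      have hcB : c ∈ B := hc.resolve_left hcA
      exact hAcB ⟨a, haB, b, hbB, c, hcB, h1, h2, h3⟩

lemma aux_component_autonomous (x : V) : Autonomous r (acyclicComponent r x) := by
  intro u hu u' hu' y hy
  obtain ⟨A, ⟨hxA, hAutA, _⟩, huA⟩ := hu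
  obtain ⟨A', ⟨hxA', hAutA', _⟩, huA'⟩ := hu'
  have hyA : y ∉ A := fun h => hy ⟨A, ⟨hxA, hAutA, ‹_›⟩, h⟩
  have hyA' : y ∉ A' := fun h => hy ⟨A', ⟨hxA', hAutA', ‹_›⟩, h⟩
  exact (hAutA u huA x hxA y hyA).trans (hAutA' x hxA' u' huA' y hyA')

lemma aux_component_acyclic (hT : IsTournament r) (x : V) :
    AcyclicSet r (acyclicComponent r x) := by
  rintro ⟨a, ha, b, hb, c, hc, h1, h2, h3⟩
  obtain ⟨A, ⟨hxA, hAutA, hAcA⟩, haA⟩ := ha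
  obtain ⟨B, ⟨hxB, hAutB, hAcB⟩, hbB⟩ := hb
  obtain ⟨C, ⟨hxC, hAutC, hAcC⟩, hcC⟩ := hc
  obtain ⟨hAutU, hAcU⟩ := aux_union hT hAutA hAcA hAutB hAcB hxA hxB
  obtain ⟨_, hAcW⟩ := aux_union hT hAutU hAcU hAutC hAcC (Or.inl hxA) hxC
  exact hAcW ⟨a, Or.inl (Or.inl haA), b, Or.inl (Or.inr hbB), c, Or.inr hcC, h1, h2, h3⟩

lemma aux_component_eq (hT : IsTournament r) {x y : V}
    (hy : y ∈ acyclicComponent r x) :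
    acyclicComponent r x = acyclicComponent r y := by
  have key : ∀ u v : V, v ∈ acyclicComponent r u →
      acyclicComponent r u ⊆ acyclicComponent r v := fun u v hv =>
    Set.subset_sUnion_of_mem ⟨hv, aux_component_autonomous u, aux_component_acyclic hT u⟩
  have h1 := key x y hy
  exact Set.Subset.antisymm h1 (key y x (h1 (aux_mem_acyclicComponent hT x)))

end Aux
section LexAux

lemma aux_lexSumRel_ne {I : Type u_1} {F : I → Type u_2} (d : I → I → Prop)
    (rels : ∀ i, F i → F i → Prop) {p q : Σ i, F i} (h : p.1 ≠ q.1) :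
    lexSumRel d rels p q ↔ d p.1 q.1 := by
  simp [lexSumRel, h]

lemma aux_lexSumRel_same {I : Type u_1} {F : I → Type u_2} (d : I → I → Prop)
    (rels : ∀ i, F i → F i → Prop) (i : I) (u v : F i) :
    lexSumRel d rels ⟨i, u⟩ ⟨i, v⟩ ↔ rels i u v := by
  constructor
  · rintro (⟨hne, -⟩ | ⟨h', hrel⟩)
    · exact absurd rfl hne
    · rwa [eq_of_heq (cast_heq _ _)] at hrel
  · intro h
    exact Or.inr ⟨rfl, by rwa [eq_of_heq (cast_heq _ _)]⟩

lemma aux_lexSumRel_mk {I : Type u_1} {F : I → Type u_2} (d : I → I → Prop)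
    (rels : ∀ i, F i → F i → Prop) {i j : I} (u : F i) (v : F j) (h : i = j) :
    lexSumRel d rels ⟨i, u⟩ ⟨j, v⟩ ↔ rels j (cast (congrArg F h) u) v := by
  subst h
  rw [show cast (congrArg F rfl) u = u from eq_of_heq (cast_heq _ _)]
  exact aux_lexSumRel_same d rels i u v

lemma aux_lexSum_no_cycle {I : Type u_1} {F : I → Type u_2} (d : I → I → Prop)
    (rels : ∀ i, F i → F i → Prop) (hac : ∀ i, AcyclicSet (rels i) Set.univ)
    {p q s : Σ i, F i} (hpq : p.1 = q.1) (hqs : q.1 = s.1) :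
    ¬ (lexSumRel d rels p q ∧ lexSumRel d rels q s ∧ lexSumRel d rels s p) := by
  obtain ⟨i, u⟩ := p
  obtain ⟨j, v⟩ := q
  obtain ⟨k, w⟩ := s
  dsimp at hpq hqs
  subst hpq; subst hqs
  rintro ⟨h1, h2, h3⟩
  rw [aux_lexSumRel_same] at h1 h2 h3
  exact hac i ⟨u, trivial, v, trivial, w, trivial, h1, h2, h3⟩

lemma aux_cast_val {V : Type u} {I : Type u_1} (c : V → I) {i j : I} (h : i = j)
    (x : V) (hx : c x = i) :
    (cast (congrArg (fun k => {x : V // c x = k}) h) ⟨x, hx⟩).val = x := by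
  subst h; rfl

lemma aux_construct {V : Type u} {r : V → V → Prop} (hT : IsTournament r) {n : ℕ}
    (c : V → Fin n)
    (hsurj : ∀ i, ∃ x, c x = i)
    (uniform : ∀ {x x' y y' : V}, c x = c x' → c y = c y' → c x ≠ c y →
      (r x y ↔ r x' y'))
    (hac : ∀ i, AcyclicSet (fun (a b : {x : V // c x = i}) => r a.val b.val) Set.univ) :
    IsFiniteLexSumOfAcyclic r := by
  refine ⟨Fin n, fun i j => i ≠ j ∧ ∃ x y : V, c x = i ∧ c y = j ∧ r x y,
    fun i => {x : V // c x = i}, fun _ a b => r a.val b.val, inferInstance, ?_, ?_, ?_⟩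
  · constructor
    · rintro i ⟨h, -⟩; exact h rfl
    · intro i j hij
      constructor
      · rintro ⟨-, x, y, hx, hy, hxy⟩ ⟨-, y', x', hy', hx', hyx⟩
        have hcc : c x ≠ c y := by rw [hx, hy]; exact hij
        have hne : x' ≠ y' := by
          intro hxx; apply hij; rw [← hx', ← hy', hxx]
        exact (hT.2 x' y' hne).mp
          ((uniform (hx.trans hx'.symm) (hy.trans hy'.symm) hcc).mp hxy) hyx
      · intro hnd
        refine ⟨hij, ?_⟩
        obtain ⟨x, hx⟩ := hsurj i
        obtain ⟨y, hy⟩ := hsurj j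
        have hne : x ≠ y := by intro hxx; apply hij; rw [← hx, ← hy, hxx]
        by_cases hr : r x y
        · exact ⟨x, y, hx, hy, hr⟩
        · exact absurd ⟨Ne.symm hij, y, x, hy, hx, (hT.2 y x (Ne.symm hne)).mpr hr⟩ hnd
  · intro i
    refine ⟨⟨fun a h => hT.1 a.val h, fun a b hab => hT.2 a.val b.val
      (fun hv => hab (Subtype.ext hv))⟩, hac i⟩
  · refine ⟨⟨fun x => ⟨c x, x, rfl⟩, fun p => p.2.val, fun x => rfl, ?_⟩, ?_⟩
    · rintro ⟨i, x, hx⟩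
      subst hx
      rfl
    · intro x y
      show r x y ↔ lexSumRel _ _ (⟨c x, ⟨x, rfl⟩⟩ : Σ i : Fin n, {x : V // c x = i}) (⟨c y, ⟨y, rfl⟩⟩ : Σ i : Fin n, {x : V // c x = i})
      by_cases hxy : c x = c y
      · rw [aux_lexSumRel_mk _ _ _ _ hxy]
        show r x y ↔ r (cast (congrArg (fun k => {x : V // c x = k}) hxy) ⟨x, rfl⟩).val y
        rw [aux_cast_val c hxy x rfl]
      · rw [aux_lexSumRel_ne _ _ hxy]
        constructor
        · intro hr
          exact ⟨hxy, x, y, rfl, rfl, hr⟩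
        · rintro ⟨-, x', y', hx', hy', hr⟩
          exact (uniform hx'.symm hy'.symm hxy).mpr hr

end LexAux

/-- A tournament is a lexicographical sum of acyclic tournaments indexed
by a finite tournament if and only if it has only finitely many acyclic components. -/
theorem finite_lexsum_iff_finitely_many_components {V : Type u} (r : V → V → Prop)
    (hT : IsTournament r) :
    IsFiniteLexSumOfAcyclic r ↔ {A : Set V | IsAcyclicComponent r A}.Finite := by
  constructor
  · rintro ⟨I, d, F, rels, hI, hd, hrels, e, hsum⟩
    haveI := hI
    rw [← Set.finite_coe_iff]
    have hrelsac : ∀ i, AcyclicSet (rels i) Set.univ := fun i => (hrels i).2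
    have hpt : ∀ A : {A : Set V // IsAcyclicComponent r A},
        ∃ x : V, A.val = acyclicComponent r x := fun A => A.2
    choose pt hpt_spec using hpt
    refine Finite.of_injective (fun A => (e (pt A)).1) ?_
    intro A B h
    dsimp only at h
    set i := (e (pt A)).1 with hi
    have hGaut : Autonomous r {x : V | (e x).1 = i} := by
      intro u hu u' hu' y hy
      have hu1 : (e u).1 = i := hu
      have hu2 : (e u').1 = i := hu'
      have hy1 : ¬ (e y).1 = i := hy
      have h1 : (e u).1 ≠ (e y).1 := fun hh => hy1 (hh ▸ hu1)
      have h2 : (e u').1 ≠ (e y).1 := fun hh => hy1 (hh ▸ hu2)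
      rw [hsum u y, hsum u' y, aux_lexSumRel_ne d rels h1, aux_lexSumRel_ne d rels h2,
        hu1, hu2]
    have hGac : AcyclicSet r {x : V | (e x).1 = i} := by
      rintro ⟨a, ha, b, hb, c, hc, h1, h2, h3⟩
      have ha1 : (e a).1 = i := ha
      have hb1 : (e b).1 = i := hb
      have hc1 : (e c).1 = i := hc
      exact aux_lexSum_no_cycle d rels hrelsac (ha1.trans hb1.symm) (hb1.trans hc1.symm)
        ⟨(hsum a b).mp h1, (hsum b c).mp h2, (hsum c a).mp h3⟩
    have hsub : ∀ v : V, (e v).1 = i → {x : V | (e x).1 = i} ⊆ acyclicComponent r v :=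
      fun v hv => Set.subset_sUnion_of_mem ⟨hv, hGaut, hGac⟩
    have h1 : pt B ∈ acyclicComponent r (pt A) := hsub (pt A) hi.symm h.symm
    have h2 : acyclicComponent r (pt A) = acyclicComponent r (pt B) :=
      aux_component_eq hT h1
    exact Subtype.ext (by rw [hpt_spec A, hpt_spec B, h2])
  · intro hfin
    classical
    haveI : Finite ↥{A : Set V | IsAcyclicComponent r A} := hfin.to_subtype
    obtain ⟨n, ⟨ψ⟩⟩ := Finite.exists_equiv_fin ↥{A : Set V | IsAcyclicComponent r A}
    set c : V → Fin n := fun x => ψ ⟨acyclicComponent r x, x, rfl⟩ with hcdef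
    have hc_eq : ∀ {x y : V}, c x = c y →
        acyclicComponent r x = acyclicComponent r y := by
      intro x y h
      exact congrArg Subtype.val (ψ.injective h)
    have hc_of : ∀ {x y : V}, acyclicComponent r x = acyclicComponent r y →
        c x = c y := by
      intro x y h
      exact congrArg ψ (Subtype.ext h)
    have hmem : ∀ x : V, x ∈ acyclicComponent r x := fun x => aux_mem_acyclicComponent hT x
    have hne_comp : ∀ {x y : V}, c x ≠ c y → y ∉ acyclicComponent r x := by
      intro x y h hy
      exact h (hc_of (aux_component_eq hT hy))
    have hsurj : ∀ i : Fin n, ∃ x, c x = i := by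
      intro i
      obtain ⟨x, hx⟩ := (ψ.symm i).2
      refine ⟨x, ?_⟩
      have hx2 : (⟨acyclicComponent r x, x, rfl⟩ :
          ↥{A : Set V | IsAcyclicComponent r A}) = ψ.symm i := Subtype.ext hx.symm
      show ψ ⟨acyclicComponent r x, x, rfl⟩ = i
      rw [hx2, ψ.apply_symm_apply]
    have uniform : ∀ {x x' y y' : V}, c x = c x' → c y = c y' → c x ≠ c y →
        (r x y ↔ r x' y') := by
      intro x x' y y' hx hy hxy
      have hAx : acyclicComponent r x = acyclicComponent r x' := hc_eq hx
      have hAy : acyclicComponent r y = acyclicComponent r y' := hc_eq hy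
      have hx'mem : x' ∈ acyclicComponent r x := hAx.symm ▸ hmem x'
      have hy'mem : y' ∈ acyclicComponent r y := hAy.symm ▸ hmem y'
      have hynin : y ∉ acyclicComponent r x := hne_comp hxy
      have hx'nin : x' ∉ acyclicComponent r y :=
        hne_comp (fun hh => hxy (hx.trans hh.symm))
      have hxy1 : x' ≠ y := fun hh => hynin (hh ▸ hx'mem)
      have hxy2 : x' ≠ y' := fun hh => hx'nin (hh.symm ▸ hy'mem)
      have step1 : r x y ↔ r x' y :=
        aux_component_autonomous x x (hmem x) x' hx'mem y hynin
      have step2 : r y x' ↔ r y' x' :=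
        aux_component_autonomous y y (hmem y) y' hy'mem x' hx'nin
      calc r x y ↔ r x' y := step1
        _ ↔ ¬ r y x' := hT.2 x' y hxy1
        _ ↔ ¬ r y' x' := not_congr step2
        _ ↔ r x' y' := (hT.2 x' y' hxy2).symm
    have hac : ∀ i, AcyclicSet (fun (a b : {x : V // c x = i}) => r a.val b.val)
        Set.univ := by
      intro i
      rintro ⟨a, -, b, -, c', -, h1, h2, h3⟩
      have e1 : acyclicComponent r b.val = acyclicComponent r a.val :=
        hc_eq (b.2.trans a.2.symm)
      have e2 : acyclicComponent r c'.val = acyclicComponent r a.val :=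
        hc_eq (c'.2.trans a.2.symm)
      exact aux_component_acyclic hT a.val
        ⟨a.val, hmem a.val, b.val, e1 ▸ hmem b.val, c'.val, e2 ▸ hmem c'.val, h1, h2, h3⟩
    exact aux_construct hT c hsurj uniform hac
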